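/- Fix α ∈ ℂ with α ≠ 0 and let B be ℂ³ with basis x, y, z and bilinear multiplication whose only nonzero products of basis elements are z·x = αx, z·y = y, and y·z = −y (this makes B a Leibniz algebra). Then B is not cyclic: there is no b ∈ B with {b, b², b³} linearly independent. -/

import Mathlib

/-- `lpow μ x k` is the left-normed power `x^(k+1)`; so `lpow μ x 0 = x`,
`lpow μ x 1 = x·x = x²`, `lpow μ x 2 = x·x² = x³`, etc. -/
def lpow {A : Type*} [AddCommGroup A] [Module ℂ A]
    (μ : A →ₗ[ℂ] A →ₗ[ℂ] A) (x : A) : ℕ → A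
  | 0 => x
  | n + 1 => μ x (lpow μ x n)
/-- The algebra B = ℂ³ with basis x = e₀, y = e₁, z = e₂ whose only nonzero products
of basis elements are z·x = αx, z·y = y, y·z = −y; thus
u·v = u₁ • L_y(v) + u₂ • L_z(v) with L_y(z) = −y, L_z(x) = αx, L_z(y) = y. -/
noncomputable def mulB (α : ℂ) : (Fin 3 → ℂ) →ₗ[ℂ] (Fin 3 → ℂ) →ₗ[ℂ] (Fin 3 → ℂ) :=
  (LinearMap.proj 1).smulRight (Matrix.mulVecLin !![0,0,0;0,0,-1;0,0,0]) +
  (LinearMap.proj 2).smulRight (Matrix.mulVecLin !![α,0,0;0,1,0;0,0,0])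

/-! The square of any `b` is a multiple of the basis vector `x`, which is an eigenvector of left
multiplication by `b` (with eigenvalue `α b₂`); hence `b³` is a multiple of `b²`. -/

theorem mulB_apply (α : ℂ) (u v : Fin 3 → ℂ) :
    mulB α u v = ![α * u 2 * v 0, u 2 * v 1 - u 1 * v 2, 0] := by
  ext i
  fin_cases i <;> simp [mulB, dotProduct, Fin.sum_univ_three] <;> ring

theorem mulB_self (α : ℂ) (b : Fin 3 → ℂ) : mulB α b b = ![α * b 2 * b 0, 0, 0] := by
  simp [mulB_apply, mul_comm]

theorem lpow_mulB_two (α : ℂ) (b : Fin 3 → ℂ) :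
    lpow (mulB α) b 2 = (α * b 2) • lpow (mulB α) b 1 := by
  simp only [lpow, mulB_self, mulB_apply]
  ext i
  fin_cases i <;> simp

theorem not_linearIndependent_of_eq_smul {R M : Type*} [Ring R] [Nontrivial R] [AddCommGroup M]
    [Module R M] (u v : M) (c : R) : ¬ LinearIndependent R ![u, v, c • v] := fun h =>
  neg_ne_zero.mpr one_ne_zero
    (LinearIndependent.pair_iff.mp (h.comp Fin.succ (Fin.succ_injective _)) c (-1) (by simp)).2

theorem algebraB_not_cyclic_general (α : ℂ) :
    ¬ ∃ b : Fin 3 → ℂ,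
        LinearIndependent ℂ ![b, lpow (mulB α) b 1, lpow (mulB α) b 2] := by
  rintro ⟨b, h⟩
  rw [lpow_mulB_two] at h
  exact not_linearIndependent_of_eq_smul _ _ _ h

/-- For α ≠ 0, the algebra B is not cyclic: no b ∈ B has
{b, b², b³} linearly independent. -/
theorem algebraB_not_cyclic (α : ℂ) (hα : α ≠ 0) :
    ¬ ∃ b : Fin 3 → ℂ,
        LinearIndependent ℂ ![b, lpow (mulB α) b 1, lpow (mulB α) b 2] :=
  algebraB_not_cyclic_general α
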